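/- arXiv:1601.00456 — 6 statements merged into one kernel-verified Lean document; each statement's English description precedes it below -/
import Mathlib

section
/- If a simple graph G is chordal, then for any positive integers s_1,...,s_n, the expansion graph G^{(s_1,...,s_n)} is chordal. -/
/-!
Project a cycle of `G^{(s)}` onto `G` by forgetting the copy index. If two non-consecutive
vertices of the cycle are copies of the same vertex, they are adjacent: that is a chord. If two
consecutive ones `k, k + 1` are, then `k - 1` is adjacent to (a copy of) the vertex of `k + 1`, and
`k - 1, k + 1` is a chord. Otherwise the projection is an injective cycle of `G`, and a chord of it
lifts back.
-/

/-- A simple graph is chordal if it has no induced cycle of length ≥ 4: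
every (injectively embedded) cycle of length `m ≥ 4` has a chord, i.e. an edge
between two non-consecutive vertices of the cycle. -/
def SimpleGraph.IsChordal {V : Type*} (G : SimpleGraph V) : Prop :=
  ∀ (m : ℕ), 4 ≤ m → ∀ f : ZMod m → V, Function.Injective f →
    (∀ k, G.Adj (f k) (f (k + 1))) →
    ∃ k l : ZMod m, k ≠ l ∧ l ≠ k + 1 ∧ k ≠ l + 1 ∧ G.Adj (f k) (f l)

/-- The `(s 0, …, s (n-1))`-expansion of a graph on `{x_0, …, x_(n-1)}`:
the vertices are the copies `x_{ij} = (i, j)` with `j < s i`; two copies of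
the same vertex are adjacent, and copies of distinct vertices are adjacent iff
the original vertices are. -/
def SimpleGraph.expansion {n : ℕ} (G : SimpleGraph (Fin n)) (s : Fin n → ℕ) :
    SimpleGraph {p : Fin n × ℕ // p.2 < s p.1} where
  Adj a b := G.Adj a.1.1 b.1.1 ∨ (a.1.1 = b.1.1 ∧ a ≠ b)
  symm := by
    constructor
    rintro a b (h | ⟨h, hne⟩)
    · exact Or.inl h.symm
    · exact Or.inr ⟨h.symm, fun e => hne e.symm⟩
  loopless := by
    constructor
    rintro a (h | ⟨_, hne⟩)
    · exact G.irrefl h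
    · exact hne rfl

namespace ZMod

lemma natCast_ne_zero_of_lt {a m : ℕ} (h0 : 0 < a) (h : a < m) : (a : ZMod m) ≠ 0 := by
  rw [Ne, natCast_eq_zero_iff]
  exact fun hdvd => (Nat.le_of_dvd h0 hdvd).not_gt h

lemma sub_one_ne_add_one_of_four_le {m : ℕ} (hm : 4 ≤ m) (k : ZMod m) :
    k - 1 ≠ k + 1 ∧ k + 1 ≠ k - 1 + 1 ∧ k - 1 ≠ k + 1 + 1 := by
  have h1 : ((1 : ℕ) : ZMod m) ≠ 0 := natCast_ne_zero_of_lt (by omega) (by omega)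
  have h2 : ((2 : ℕ) : ZMod m) ≠ 0 := natCast_ne_zero_of_lt (by omega) (by omega)
  have h3 : ((3 : ℕ) : ZMod m) ≠ 0 := natCast_ne_zero_of_lt (by omega) (by omega)
  push_cast at h1 h2 h3
  exact ⟨fun h => h2 (by linear_combination -h), fun h => h1 (by linear_combination h),
    fun h => h3 (by linear_combination -h)⟩

end ZMod

namespace SimpleGraph

variable {V W : Type*}

/-- `H` arises from `G` by replacing each vertex `v` with the clique `φ ⁻¹' {v}`. -/
def IsCliqueBlowup (H : SimpleGraph W) (G : SimpleGraph V) (φ : W → V) : Prop :=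
  ∀ a b, H.Adj a b ↔ G.Adj (φ a) (φ b) ∨ (φ a = φ b ∧ a ≠ b)

def HasChord (H : SimpleGraph W) {m : ℕ} (f : ZMod m → W) : Prop :=
  ∃ k l : ZMod m, k ≠ l ∧ l ≠ k + 1 ∧ k ≠ l + 1 ∧ H.Adj (f k) (f l)

lemma isChordal_iff_hasChord (H : SimpleGraph W) :
    H.IsChordal ↔ ∀ m, 4 ≤ m → ∀ f : ZMod m → W, Function.Injective f →
      (∀ k, H.Adj (f k) (f (k + 1))) → H.HasChord f :=
  Iff.rfl

namespace IsCliqueBlowup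

variable {G : SimpleGraph V} {H : SimpleGraph W} {φ : W → V} {m : ℕ} {f : ZMod m → W}

lemma hasChord_of_map_eq (hφ : H.IsCliqueBlowup G φ) (hf : Function.Injective f)
    {k l : ZMod m} (hkl : k ≠ l) (hlk : l ≠ k + 1) (hkl' : k ≠ l + 1) (heq : φ (f k) = φ (f l)) :
    H.HasChord f :=
  ⟨k, l, hkl, hlk, hkl', (hφ _ _).2 (Or.inr ⟨heq, hf.ne hkl⟩)⟩

lemma hasChord_of_map_eq_map_succ (hφ : H.IsCliqueBlowup G φ) (hm : 4 ≤ m)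
    (hf : Function.Injective f) (hcyc : ∀ k, H.Adj (f k) (f (k + 1))) {k : ZMod m}
    (heq : φ (f k) = φ (f (k + 1))) : H.HasChord f := by
  obtain ⟨h₁, h₂, h₃⟩ := ZMod.sub_one_ne_add_one_of_four_le hm k
  refine ⟨k - 1, k + 1, h₁, h₂, h₃, (hφ _ _).2 ?_⟩
  have hprev := (hφ _ _).1 (hcyc (k - 1))
  rw [sub_add_cancel, heq] at hprev
  exact hprev.imp_right fun h => ⟨h.1, hf.ne h₁⟩

lemma hasChord_of_map_ne_map_succ (hφ : H.IsCliqueBlowup G φ) (hG : G.IsChordal) (hm : 4 ≤ m)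
    (hf : Function.Injective f) (hcyc : ∀ k, H.Adj (f k) (f (k + 1)))
    (hne : ∀ k, φ (f k) ≠ φ (f (k + 1))) : H.HasChord f := by
  by_cases hinj : Function.Injective (φ ∘ f)
  · have hGcyc : ∀ k, G.Adj (φ (f k)) (φ (f (k + 1))) := fun k =>
      ((hφ _ _).1 (hcyc k)).resolve_right fun h => hne k h.1
    obtain ⟨k, l, hkl, hlk, hkl', hadj⟩ := hG m hm (φ ∘ f) hinj hGcyc
    exact ⟨k, l, hkl, hlk, hkl', (hφ _ _).2 (Or.inl hadj)⟩
  · obtain ⟨k, l, heq, hkl⟩ := Function.not_injective_iff.1 hinj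
    refine hφ.hasChord_of_map_eq hf hkl ?_ ?_ heq
    · rintro rfl; exact hne k heq
    · rintro rfl; exact hne l heq.symm

end IsCliqueBlowup

lemma IsChordal.of_isCliqueBlowup {G : SimpleGraph V} {H : SimpleGraph W} {φ : W → V}
    (hG : G.IsChordal) (hφ : H.IsCliqueBlowup G φ) : H.IsChordal := by
  rw [isChordal_iff_hasChord]
  intro m hm f hf hcyc
  by_cases hcollapse : ∃ k, φ (f k) = φ (f (k + 1))
  · obtain ⟨k, hk⟩ := hcollapse
    exact hφ.hasChord_of_map_eq_map_succ hm hf hcyc hk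
  · exact hφ.hasChord_of_map_ne_map_succ hG hm hf hcyc fun k hk => hcollapse ⟨k, hk⟩

lemma expansion_isCliqueBlowup {n : ℕ} (G : SimpleGraph (Fin n)) (s : Fin n → ℕ) :
    (G.expansion s).IsCliqueBlowup G (fun a => a.1.1) :=
  fun _ _ => Iff.rfl

end SimpleGraph

/-- if `G` is chordal then so is any expansion `G^{(s₁,…,sₙ)}`. -/
theorem SimpleGraph.IsChordal.expansion {n : ℕ} (G : SimpleGraph (Fin n))
    (s : Fin n → ℕ) (hG : G.IsChordal) :
    (G.expansion s).IsChordal :=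
  hG.of_isCliqueBlowup (expansion_isCliqueBlowup G s)
end

section
/- A simplicial complex Δ is vertex decomposable if and only if its expansion Δ^{(s_1,...,s_n)} is vertex decomposable, for any positive integers s_1,...,s_n. -/
open Finset

/-- An (abstract) simplicial complex on vertex set `V`: a downward closed
family of finite subsets of `V`. -/
structure SimplicialComplex (V : Type*) where
  faces : Set (Finset V)
  down_closed : ∀ ⦃F G : Finset V⦄, F ∈ faces → G ⊆ F → G ∈ faces

namespace SimplicialComplex

variable {V : Type*}

/-- A facet is a maximal face. -/
def IsFacet (Δ : SimplicialComplex V) (F : Finset V) : Prop :=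
  F ∈ Δ.faces ∧ ∀ G ∈ Δ.faces, F ⊆ G → F = G

/-- The deletion `del_Δ(x)`. -/
def del [DecidableEq V] (Δ : SimplicialComplex V) (x : V) : SimplicialComplex V where
  faces := {F | F ∈ Δ.faces ∧ x ∉ F}
  down_closed := fun _F _G hF hG => ⟨Δ.down_closed hF.1 hG, fun hx => hF.2 (hG hx)⟩

/-- The link `lk_Δ(x)`. -/
def link [DecidableEq V] (Δ : SimplicialComplex V) (x : V) : SimplicialComplex V where
  faces := {F | x ∉ F ∧ insert x F ∈ Δ.faces}
  down_closed := fun _F _G hF hG =>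
    ⟨fun hx => hF.1 (hG hx), Δ.down_closed hF.2 (Finset.insert_subset_insert x hG)⟩

/-- The simplex `⟨F⟩` on a finite vertex set `F`. -/
def simplex (F : Finset V) : SimplicialComplex V where
  faces := {G | G ⊆ F}
  down_closed := fun _ _ hF hG => hG.trans hF

/-- Vertex decomposability (non-pure sense). -/
inductive IsVertexDecomposable [DecidableEq V] : SimplicialComplex V → Prop
  | simplex (Δ : SimplicialComplex V) (F : Finset V) (h : Δ.faces = {G | G ⊆ F}) :
      IsVertexDecomposable Δ
  | shed (Δ : SimplicialComplex V) (x : V)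
      (hdel : IsVertexDecomposable (Δ.del x))
      (hlink : IsVertexDecomposable (Δ.link x))
      (hfacet : ∀ F, (Δ.del x).IsFacet F → Δ.IsFacet F) :
      IsVertexDecomposable Δ

/-- Shellability (non-pure sense): an ordering `F 0 < F 1 < ⋯` of all the
facets such that for `i < j` there are `v ∈ F j \ F i` and `l < j` with
`F j \ F l = {v}`. -/
def IsShellable [DecidableEq V] (Δ : SimplicialComplex V) : Prop :=
  ∃ (m : ℕ) (F : Fin m → Finset V),
    Function.Injective F ∧
    (∀ G, Δ.IsFacet G ↔ ∃ i, F i = G) ∧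
    ∀ i j : Fin m, i < j → ∃ v ∈ F j, v ∉ F i ∧ ∃ l, l < j ∧ F j \ F l = {v}

/-- A simplicial complex is pure if all facets have the same cardinality. -/
def IsPure (Δ : SimplicialComplex V) : Prop :=
  ∀ F G, Δ.IsFacet F → Δ.IsFacet G → F.card = G.card

/-- The `(s 0, …, s (n-1))`-expansion of a simplicial complex on `{x_0, …, x_(n-1)}`.
The vertex `x_{ij}` (for `1 ≤ j ≤ s i`) is encoded as the pair `(i, s i - j)`;
so the copies of `x i` are the pairs `(i, r)` with `r < s i`.  The faces are
exactly the subsets of the sets `{x_{i₁ r₁}, …, x_{i_k r_k}}` where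
`{x_{i₁}, …, x_{i_k}}` is a face (equivalently, a facet) of `Δ`. -/
def expansion {n : ℕ} (Δ : SimplicialComplex (Fin n)) (s : Fin n → ℕ) :
    SimplicialComplex (Fin n × ℕ) where
  faces := {E | E.image Prod.fst ∈ Δ.faces ∧ (∀ p ∈ E, p.2 < s p.1) ∧
    ∀ p ∈ E, ∀ q ∈ E, p.1 = q.1 → p = q}
  down_closed := fun _E _G hE hG =>
    ⟨Δ.down_closed hE.1 (Finset.image_subset_image hG),
     fun p hp => hE.2.1 p (hG hp),
     fun p hp q hq => hE.2.2 p (hG hp) q (hG hq)⟩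

/-- Restriction of a simplicial complex to a subtype of the vertices. -/
def restrict (Δ : SimplicialComplex V) (P : V → Prop) : SimplicialComplex {v // P v} where
  faces := {F | F.map (Function.Embedding.subtype P) ∈ Δ.faces}
  down_closed := fun _F _G hF hG =>
    Δ.down_closed hF (Finset.map_subset_map.mpr hG)

end SimplicialComplex


namespace SimplicialComplex

variable {n : ℕ}

lemma faces_ext {V : Type*} {Γ₁ Γ₂ : SimplicialComplex V} (h : Γ₁.faces = Γ₂.faces) :
    Γ₁ = Γ₂ := by
  cases Γ₁; cases Γ₂; simpa using h

lemma mem_expansion {Δ : SimplicialComplex (Fin n)} {s : Fin n → ℕ}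
    {E : Finset (Fin n × ℕ)} :
    E ∈ (Δ.expansion s).faces ↔ (E.image Prod.fst ∈ Δ.faces ∧ (∀ p ∈ E, p.2 < s p.1) ∧
      ∀ p ∈ E, ∀ q ∈ E, p.1 = q.1 → p = q) := Iff.rfl

/-- Every face extends to a facet, provided face cardinalities are bounded. -/
lemma exists_facet_superset {V : Type*} (C : SimplicialComplex V) (N : ℕ)
    (hb : ∀ E ∈ C.faces, E.card ≤ N) {A : Finset V} (hA : A ∈ C.faces) :
    ∃ B, C.IsFacet B ∧ A ⊆ B := by
  have key : ∀ k, ∀ A ∈ C.faces, N - A.card ≤ k → ∃ B, C.IsFacet B ∧ A ⊆ B := by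
    intro k
    induction k with
    | zero =>
      intro A hA hk
      refine ⟨A, ⟨hA, ?_⟩, Finset.Subset.refl A⟩
      intro G hG hAG
      by_contra hne
      have h1 : A.card < G.card := Finset.card_lt_card (lt_of_le_of_ne hAG hne)
      have h2 := hb G hG
      omega
    | succ k ih =>
      intro A hA hk
      by_cases hmax : ∀ G ∈ C.faces, A ⊆ G → A = G
      · exact ⟨A, ⟨hA, hmax⟩, Finset.Subset.refl A⟩
      · push_neg at hmax
        obtain ⟨G, hG, hAG, hne⟩ := hmax
        have hc : A.card < G.card := Finset.card_lt_card (lt_of_le_of_ne hAG hne)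
        obtain ⟨B, hB, hGB⟩ := ih G hG (by have := hb G hG; omega)
        exact ⟨B, hB, hAG.trans hGB⟩
  exact key N A hA (by omega)

/-- The link of a copy `(i, r)` in the expansion is the expansion of the link. -/
lemma link_expansion {Δ : SimplicialComplex (Fin n)} {s : Fin n → ℕ} {i : Fin n} {r : ℕ}
    (hr : r < s i) :
    (Δ.expansion s).link (i, r) = (Δ.link i).expansion s := by
  apply faces_ext
  ext E
  show ((i,r) ∉ E ∧ insert (i,r) E ∈ (Δ.expansion s).faces) ↔ _
  rw [mem_expansion, mem_expansion]
  constructor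
  · rintro ⟨hpE, hf, hc, hj⟩
    have hiE : ∀ p ∈ E, p.1 ≠ i := by
      intro p hp h1
      have := hj p (mem_insert_of_mem hp) (i,r) (mem_insert_self _ _) h1
      exact hpE (this ▸ hp)
    refine ⟨⟨?_, ?_⟩, ?_, ?_⟩
    · intro hmem
      obtain ⟨p, hp, hp1⟩ := Finset.mem_image.mp hmem
      exact hiE p hp hp1
    · rwa [Finset.image_insert] at hf
    · exact fun p hp => hc p (mem_insert_of_mem hp)
    · exact fun p hp q hq h => hj p (mem_insert_of_mem hp) q (mem_insert_of_mem hq) h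
  · rintro ⟨⟨hni, hf⟩, hc, hj⟩
    have hiE : ∀ p ∈ E, p.1 ≠ i := by
      intro p hp h1
      exact hni (Finset.mem_image.mpr ⟨p, hp, h1⟩)
    refine ⟨fun h => hiE _ h rfl, ?_, ?_, ?_⟩
    · rw [Finset.image_insert]; exact hf
    · intro p hp
      rcases Finset.mem_insert.mp hp with h | h
      · subst h; exact hr
      · exact hc p h
    · intro p hp q hq h
      rcases Finset.mem_insert.mp hp with h1 | h1 <;> rcases Finset.mem_insert.mp hq with h2 | h2
      · rw [h1, h2]
      · subst h1; exact absurd h.symm (hiE q h2)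
      · subst h2; exact absurd h (hiE p h1)
      · exact hj p h1 q h2 h

/-- Deleting the copy `(i, r)` from the expansion and relabelling `(i, r) ↔ (i, s i - 1)`
yields the expansion with multiplicity `s i - 1` at `i`. -/
lemma del_expansion_swap {Δ : SimplicialComplex (Fin n)} {s : Fin n → ℕ} {i : Fin n} {r : ℕ}
    (hr : r < s i) (E : Finset (Fin n × ℕ)) :
    E ∈ ((Δ.expansion s).del (i, r)).faces ↔
      E.image (Equiv.swap (i, r) (i, s i - 1)) ∈
        (Δ.expansion (Function.update s i (s i - 1))).faces := by
  set t := s i - 1 with ht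
  set σ := Equiv.swap (i, r) (i, t) with hσdef
  have hσr : σ (i, r) = (i, t) := Equiv.swap_apply_left _ _
  have hσt : σ (i, t) = (i, r) := Equiv.swap_apply_right _ _
  have hσo : ∀ p : Fin n × ℕ, p ≠ (i, r) → p ≠ (i, t) → σ p = p :=
    fun p h1 h2 => Equiv.swap_apply_of_ne_of_ne h1 h2
  have hfst : ∀ p : Fin n × ℕ, (σ p).1 = p.1 := by
    intro p
    rcases eq_or_ne p (i, r) with h | h
    · rw [h, hσr]
    · rcases eq_or_ne p (i, t) with h2 | h2
      · rw [h2, hσt]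
      · rw [hσo p h h2]
  have himg : (E.image σ).image Prod.fst = E.image Prod.fst := by
    rw [Finset.image_image]
    exact Finset.image_congr (fun p _ => hfst p)
  have hupi : Function.update s i t i = t := Function.update_self i t s
  have hupo : ∀ j, j ≠ i → Function.update s i t j = s j :=
    fun j hj => Function.update_of_ne hj t s
  show (E ∈ (Δ.expansion s).faces ∧ (i, r) ∉ E) ↔ _
  rw [mem_expansion, mem_expansion, himg]
  constructor
  · rintro ⟨⟨hf, hc, hj⟩, hnr⟩
    refine ⟨hf, ?_, ?_⟩
    · intro p hp
      obtain ⟨x, hx, rfl⟩ := Finset.mem_image.mp hp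
      rcases eq_or_ne x (i, r) with h1 | h1
      · exact absurd (h1 ▸ hx) hnr
      rcases eq_or_ne x (i, t) with h2 | h2
      · rw [h2, hσt]
        have hxr : r ≠ t := by
          intro h; apply hnr; rw [h]; exact h2 ▸ hx
        simp only [hupi]
        omega
      · rw [hσo x h1 h2]
        rcases eq_or_ne x.1 i with h3 | h3
        · have hxr : x.2 ≠ r := fun h => h1 (Prod.ext h3 h)
          have hxt : x.2 ≠ t := fun h => h2 (Prod.ext h3 h)
          have := hc x hx
          rw [h3, hupi]
          rw [h3] at this
          omega
        · rw [hupo _ h3]; exact hc x hx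
    · intro p hp q hq hpq
      obtain ⟨x, hx, rfl⟩ := Finset.mem_image.mp hp
      obtain ⟨y, hy, rfl⟩ := Finset.mem_image.mp hq
      rw [hfst x, hfst y] at hpq
      rw [hj x hx y hy hpq]
  · rintro ⟨hf, hc, hj⟩
    have hnr : (i, r) ∉ E := by
      intro hmem
      have := hc (σ (i, r)) (Finset.mem_image_of_mem σ hmem)
      rw [hσr, hupi] at this
      omega
    refine ⟨⟨hf, ?_, ?_⟩, hnr⟩
    · intro x hx
      rcases eq_or_ne x (i, t) with h2 | h2
      · rw [h2]; show t < s i; omega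
      rcases eq_or_ne x (i, r) with h1 | h1
      · exact absurd (h1 ▸ hx) hnr
      · have := hc (σ x) (Finset.mem_image_of_mem σ hx)
        rw [hσo x h1 h2] at this
        rcases eq_or_ne x.1 i with h3 | h3
        · rw [h3] at this ⊢; rw [hupi] at this; omega
        · rwa [hupo _ h3] at this
    · intro x hx y hy hxy
      have := hj (σ x) (Finset.mem_image_of_mem σ hx) (σ y) (Finset.mem_image_of_mem σ hy)
        (by rw [hfst x, hfst y]; exact hxy)
      exact σ.injective this

lemma del_expansion_top {Δ : SimplicialComplex (Fin n)} {s : Fin n → ℕ} {i : Fin n}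
    (hr : 1 ≤ s i) :
    (Δ.expansion s).del (i, s i - 1) = Δ.expansion (Function.update s i (s i - 1)) := by
  apply faces_ext
  ext E
  rw [show (E ∈ ((Δ.expansion s).del (i, s i - 1)).faces) ↔
      E.image (Equiv.swap (i, s i - 1) (i, s i - 1)) ∈
        (Δ.expansion (Function.update s i (s i - 1))).faces from
    del_expansion_swap (by omega) E]
  rw [Equiv.swap_self]
  simp

lemma del_expansion_one {Δ : SimplicialComplex (Fin n)} {s : Fin n → ℕ} {i : Fin n}
    (h1 : s i = 1) :
    (Δ.expansion s).del (i, 0) = (Δ.del i).expansion s := by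
  apply faces_ext
  ext E
  show (E ∈ (Δ.expansion s).faces ∧ (i, 0) ∉ E) ↔ _
  rw [mem_expansion, mem_expansion]
  constructor
  · rintro ⟨⟨hf, hc, hj⟩, h0⟩
    refine ⟨⟨hf, ?_⟩, hc, hj⟩
    intro hmem
    obtain ⟨p, hp, hp1⟩ := Finset.mem_image.mp hmem
    have hp2 : p.2 = 0 := by have := hc p hp; rw [hp1] at this; omega
    have hpi : p = ((i, 0) : Fin n × ℕ) := Prod.ext hp1 hp2
    exact h0 (hpi ▸ hp)
  · rintro ⟨⟨hf, hni⟩, hc, hj⟩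
    refine ⟨⟨hf, hc, hj⟩, ?_⟩
    intro hmem
    exact hni (Finset.mem_image.mpr ⟨(i, 0), hmem, rfl⟩)

lemma facet_del_top {Δ : SimplicialComplex (Fin n)} {s : Fin n → ℕ} {i : Fin n}
    (h2 : 2 ≤ s i) (E : Finset (Fin n × ℕ))
    (hE : ((Δ.expansion s).del (i, s i - 1)).IsFacet E) : (Δ.expansion s).IsFacet E := by
  obtain ⟨hEdel, hEmax⟩ := hE
  obtain ⟨hEf, hEt⟩ := hEdel
  set t := s i - 1 with ht
  refine ⟨hEf, ?_⟩
  intro G hG hEG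
  by_cases hGt : (i, t) ∈ G
  · exfalso
    obtain ⟨hGf, hGc, hGj⟩ := hG
    have hEi : ∀ k, (i, k) ∉ E := by
      intro k hk
      have := hGj (i, k) (hEG hk) (i, t) hGt rfl
      exact hEt (this ▸ hk)
    have hne : ((i, 0) : Fin n × ℕ) ≠ (i, t) := by
      intro h
      have : (0 : ℕ) = t := congrArg Prod.snd h
      omega
    have hG'f : insert (i, 0) (G.erase (i, t)) ∈ (Δ.expansion s).faces := by
      refine ⟨?_, ?_, ?_⟩
      · apply Δ.down_closed hGf
        rw [Finset.image_insert]
        refine Finset.insert_subset_iff.mpr ⟨?_, ?_⟩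
        · exact Finset.mem_image.mpr ⟨(i, t), hGt, rfl⟩
        · exact Finset.image_subset_image (Finset.erase_subset _ _)
      · intro p hp
        rcases Finset.mem_insert.mp hp with h | h
        · subst h; show (0 : ℕ) < s i; omega
        · exact hGc p (Finset.mem_of_mem_erase h)
      · intro p hp q hq hpq
        rcases Finset.mem_insert.mp hp with h1 | h1 <;> rcases Finset.mem_insert.mp hq with h2 | h2
        · rw [h1, h2]
        · exfalso
          subst h1
          exact (Finset.ne_of_mem_erase h2)
            (hGj q (Finset.mem_of_mem_erase h2) (i, t) hGt hpq.symm)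
        · exfalso
          subst h2
          exact (Finset.ne_of_mem_erase h1)
            (hGj p (Finset.mem_of_mem_erase h1) (i, t) hGt hpq)
        · exact hGj p (Finset.mem_of_mem_erase h1) q (Finset.mem_of_mem_erase h2) hpq
    have hEG' : E ⊆ insert (i, 0) (G.erase (i, t)) := by
      intro y hy
      apply Finset.mem_insert_of_mem
      refine Finset.mem_erase.mpr ⟨?_, hEG hy⟩
      intro h
      exact hEi t (h ▸ hy)
    have heq := hEmax _ ⟨hG'f, by
      intro h
      rcases Finset.mem_insert.mp h with h' | h'
      · exact hne h'.symm
      · exact (Finset.ne_of_mem_erase h') rfl⟩ hEG'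
    exact hEi 0 (heq ▸ Finset.mem_insert_self _ _)
  · exact hEmax G ⟨hG, hGt⟩ hEG

lemma facet_del_one {Δ : SimplicialComplex (Fin n)} {s : Fin n → ℕ} {x : Fin n}
    (h1 : s x = 1) (hs : ∀ i, 0 < s i)
    (hshed : ∀ F, (Δ.del x).IsFacet F → Δ.IsFacet F) (E : Finset (Fin n × ℕ))
    (hE : ((Δ.expansion s).del (x, 0)).IsFacet E) : (Δ.expansion s).IsFacet E := by
  rw [del_expansion_one h1] at hE
  obtain ⟨hEf, hEmax⟩ := hE
  obtain ⟨hf, hc, hj⟩ := hEf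
  obtain ⟨hFΔ, hFx⟩ := hf
  have Ffacet : (Δ.del x).IsFacet (E.image Prod.fst) := by
    refine ⟨⟨hFΔ, hFx⟩, ?_⟩
    intro G hG hFG
    by_contra hne
    obtain ⟨g, hgG, hgF⟩ := Finset.exists_of_ssubset
      (lt_of_le_of_ne hFG hne)
    have hE'f : insert (g, 0) E ∈ ((Δ.del x).expansion s).faces := by
      refine ⟨?_, ?_, ?_⟩
      · rw [Finset.image_insert]
        exact (Δ.del x).down_closed hG (Finset.insert_subset_iff.mpr ⟨hgG, hFG⟩)
      · intro p hp
        rcases Finset.mem_insert.mp hp with h | h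
        · subst h; exact hs g
        · exact hc p h
      · intro p hp q hq hpq
        rcases Finset.mem_insert.mp hp with h1 | h1 <;> rcases Finset.mem_insert.mp hq with h2 | h2
        · rw [h1, h2]
        · exfalso; subst h1
          exact hgF (Finset.mem_image.mpr ⟨q, h2, hpq.symm⟩)
        · exfalso; subst h2
          exact hgF (Finset.mem_image.mpr ⟨p, h1, hpq⟩)
        · exact hj p h1 q h2 hpq
    have heq := hEmax _ hE'f (Finset.subset_insert _ _)
    exact hgF (Finset.mem_image.mpr ⟨(g, 0), heq ▸ Finset.mem_insert_self _ _, rfl⟩)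
  have Δfacet := hshed _ Ffacet
  refine ⟨⟨hFΔ, hc, hj⟩, ?_⟩
  intro G hG hEG
  obtain ⟨hGf, hGc, hGj⟩ := hG
  have himg := Δfacet.2 (G.image Prod.fst) hGf (Finset.image_subset_image hEG)
  apply hEmax G ⟨⟨hGf, ?_⟩, hGc, hGj⟩ hEG
  rw [← himg]
  exact hFx

lemma expansion_simplex_base (F : Finset (Fin n)) (Δ : SimplicialComplex (Fin n))
    (s : Fin n → ℕ) (hΔ : Δ.faces = {G | G ⊆ F}) (hs : ∀ i, 0 < s i)
    (hone : ∀ i ∈ F, s i = 1) : IsVertexDecomposable (Δ.expansion s) := by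
  refine IsVertexDecomposable.simplex _ (F.image (fun i => (i, 0))) ?_
  ext E
  constructor
  · rintro ⟨hf, hc, hj⟩
    intro p hp
    have hp1 : p.1 ∈ F := by
      rw [hΔ] at hf
      exact hf (Finset.mem_image_of_mem _ hp)
    have hp2 : p.2 = 0 := by
      have h1 := hc p hp
      have h2 := hone p.1 hp1
      omega
    have hpe : p = (p.1, (0 : ℕ)) := Prod.ext rfl hp2
    exact Finset.mem_image.mpr ⟨p.1, hp1, hpe.symm⟩
  · intro hEsub
    refine ⟨?_, ?_, ?_⟩
    · rw [hΔ]
      intro j hj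
      obtain ⟨p, hp, rfl⟩ := Finset.mem_image.mp hj
      obtain ⟨a, ha, hap⟩ := Finset.mem_image.mp (hEsub hp)
      rw [← hap]
      exact ha
    · intro p hp
      obtain ⟨a, ha, hap⟩ := Finset.mem_image.mp (hEsub hp)
      rw [← hap]
      exact hs a
    · intro p hp q hq hpq
      obtain ⟨a, ha, hap⟩ := Finset.mem_image.mp (hEsub hp)
      obtain ⟨b, hb, hbq⟩ := Finset.mem_image.mp (hEsub hq)
      refine Prod.ext hpq ?_
      rw [← hap, ← hbq]

lemma expansion_simplex_vd (N : ℕ) : ∀ (F : Finset (Fin n)) (Δ : SimplicialComplex (Fin n))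
    (s : Fin n → ℕ), Δ.faces = {G | G ⊆ F} → (∀ i, 0 < s i) → (∑ i ∈ F, s i) ≤ N →
    IsVertexDecomposable (Δ.expansion s) := by
  induction N with
  | zero =>
    intro F Δ s hΔ hs hN
    refine expansion_simplex_base F Δ s hΔ hs ?_
    intro i hi
    have h1 : s i ≤ ∑ j ∈ F, s j := Finset.single_le_sum (fun j _ => Nat.zero_le (s j)) hi
    have := hs i
    omega
  | succ N ih =>
    intro F Δ s hΔ hs hN
    by_cases hbig : ∃ i ∈ F, 2 ≤ s i
    · obtain ⟨i, hiF, hi2⟩ := hbig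
      have hsum : ∑ j ∈ F.erase i, s j + s i = ∑ j ∈ F, s j := Finset.sum_erase_add F s hiF
      refine IsVertexDecomposable.shed _ (i, s i - 1) ?_ ?_ ?_
      · rw [del_expansion_top (by omega)]
        refine ih F Δ _ hΔ (fun j => ?_) ?_
        · rcases eq_or_ne j i with rfl | hj
          · rw [Function.update_self]; omega
          · rw [Function.update_of_ne hj]; exact hs j
        · rw [Finset.sum_update_of_mem hiF, Finset.sdiff_singleton_eq_erase]
          omega
      · rw [link_expansion (by omega)]
        refine ih (F.erase i) (Δ.link i) s ?_ hs (by omega)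
        ext G
        show i ∉ G ∧ insert i G ∈ Δ.faces ↔ G ⊆ F.erase i
        rw [hΔ]
        constructor
        · rintro ⟨hiG, hins⟩ g hg
          exact Finset.mem_erase.mpr ⟨fun h => hiG (h ▸ hg), hins (Finset.mem_insert_of_mem hg)⟩
        · intro hsub
          refine ⟨fun h => (Finset.mem_erase.mp (hsub h)).1 rfl, ?_⟩
          show insert i G ⊆ F
          exact Finset.insert_subset_iff.mpr
            ⟨hiF, fun g hg => Finset.mem_of_mem_erase (hsub hg)⟩
      · exact fun E hE => facet_del_top hi2 E hE
    · push_neg at hbig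
      refine expansion_simplex_base F Δ s hΔ hs ?_
      intro i hi
      have h1 := hs i
      have h2 := hbig i hi
      omega

lemma expansion_vd_forward {Δ : SimplicialComplex (Fin n)}
    (h : IsVertexDecomposable Δ) :
    ∀ (s : Fin n → ℕ), (∀ i, 0 < s i) → IsVertexDecomposable (Δ.expansion s) := by
  induction h with
  | simplex Δ' F hF =>
    intro s hs
    exact expansion_simplex_vd (∑ i ∈ F, s i) F Δ' s hF hs le_rfl
  | shed Δ' x hdel hlink hfacet ihdel ihlink =>
    intro s hs
    have key : ∀ k (s : Fin n → ℕ), (∀ i, 0 < s i) → s x ≤ k + 1 →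
        IsVertexDecomposable (Δ'.expansion s) := by
      intro k
      induction k with
      | zero =>
        intro s hs hsx
        have h1 : s x = 1 := by have := hs x; omega
        refine IsVertexDecomposable.shed _ (x, 0) ?_ ?_ ?_
        · rw [del_expansion_one h1]; exact ihdel s hs
        · rw [link_expansion (by omega)]; exact ihlink s hs
        · exact fun E hE => facet_del_one h1 hs hfacet E hE
      | succ k ihk =>
        intro s hs hsx
        rcases Nat.lt_or_ge (s x) (k + 2) with h | h
        · exact ihk s hs (by omega)
        · refine IsVertexDecomposable.shed _ (x, s x - 1) ?_ ?_ ?_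
          · rw [del_expansion_top (by omega)]
            refine ihk _ (fun j => ?_) ?_
            · rcases eq_or_ne j x with rfl | hj
              · rw [Function.update_self]; omega
              · rw [Function.update_of_ne hj]; exact hs j
            · rw [Function.update_self]; omega
          · rw [link_expansion (by omega)]; exact ihlink s hs
          · exact fun E hE => facet_del_top (by omega) E hE
    exact key (s x) s hs (by omega)

lemma expansion_vd_backward : ∀ (Γ : SimplicialComplex (Fin n × ℕ)),
    IsVertexDecomposable Γ → ∀ (Δ : SimplicialComplex (Fin n)) (s : Fin n → ℕ),
    (∀ i, 0 < s i) → ∀ (e : (Fin n × ℕ) ≃ (Fin n × ℕ)),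
    (∀ E : Finset (Fin n × ℕ), E ∈ Γ.faces ↔ E.image e ∈ (Δ.expansion s).faces) →
    IsVertexDecomposable Δ := by
  intro Γ hΓ
  induction hΓ with
  | simplex Γ F₀ h =>
    intro Δ s hs e hcorr
    refine IsVertexDecomposable.simplex _ ((F₀.image e).image Prod.fst) ?_
    have hF₀ : F₀ ∈ Γ.faces := by rw [h]; exact Finset.Subset.refl F₀
    have hEf := (hcorr F₀).mp hF₀
    obtain ⟨hEf1, hEf2, hEf3⟩ := hEf
    ext G
    constructor
    · intro hG
      have hlift : G.image (fun j => ((j, 0) : Fin n × ℕ)) ∈ (Δ.expansion s).faces := by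
        refine ⟨?_, ?_, ?_⟩
        · rw [Finset.image_image,
            show (Prod.fst ∘ fun j => ((j, 0) : Fin n × ℕ)) = id from rfl, Finset.image_id]
          exact hG
        · intro p hp
          obtain ⟨a, ha, rfl⟩ := Finset.mem_image.mp hp
          exact hs a
        · intro p hp q hq hpq
          obtain ⟨a, ha, rfl⟩ := Finset.mem_image.mp hp
          obtain ⟨b, hb, rfl⟩ := Finset.mem_image.mp hq
          exact Prod.ext hpq rfl
      have hmem : (G.image (fun j => ((j, 0) : Fin n × ℕ))).image e.symm ∈ Γ.faces := by
        apply (hcorr _).mpr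
        rw [Finset.image_image]
        simpa using hlift
      rw [h] at hmem
      intro g hg
      have h1 : ((g, 0) : Fin n × ℕ) ∈ G.image (fun j => ((j, 0) : Fin n × ℕ)) :=
        Finset.mem_image_of_mem _ hg
      have h2 : e.symm (g, 0) ∈ F₀ := hmem (Finset.mem_image_of_mem _ h1)
      have h3 : ((g, 0) : Fin n × ℕ) ∈ F₀.image e :=
        Finset.mem_image.mpr ⟨_, h2, e.apply_symm_apply _⟩
      exact Finset.mem_image_of_mem _ h3
    · intro hG
      exact Δ.down_closed hEf1 hG
  | shed Γ p hdel hlink hfacet ihdel ihlink =>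
    intro Δ s hs e hcorr
    have hmemim : ∀ (A : Finset (Fin n × ℕ)) (x : Fin n × ℕ), e x ∈ A.image e ↔ x ∈ A := by
      intro A x
      constructor
      · intro hx
        obtain ⟨y, hy, hyx⟩ := Finset.mem_image.mp hx
        rw [← e.injective hyx]
        exact hy
      · exact Finset.mem_image_of_mem e
    by_cases hr : (e p).2 < s (e p).1
    · obtain ⟨i, r, hq⟩ : ∃ i r, e p = (i, r) := ⟨(e p).1, (e p).2, rfl⟩
      rw [hq] at hr
      replace hr : r < s i := hr
      by_cases h2 : 2 ≤ s i
      · -- swap case: apply ihdel with relabelled expansion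
        refine ihdel Δ (Function.update s i (s i - 1)) (fun j => ?_)
          (e.trans (Equiv.swap (i, r) (i, s i - 1))) ?_
        · rcases eq_or_ne j i with rfl | hj
          · rw [Function.update_self]; omega
          · rw [Function.update_of_ne hj]; exact hs j
        · intro E
          have step1 : E ∈ (Γ.del p).faces ↔
              E.image e ∈ ((Δ.expansion s).del (i, r)).faces := by
            constructor
            · rintro ⟨hE, hpE⟩
              refine ⟨(hcorr E).mp hE, ?_⟩
              rw [← hq]
              exact fun hmem => hpE ((hmemim E p).mp hmem)
            · rintro ⟨hE, hpE⟩
              refine ⟨(hcorr E).mpr hE, ?_⟩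
              intro hmem
              exact hpE (hq ▸ Finset.mem_image_of_mem e hmem)
          rw [step1, del_expansion_swap hr]
          rw [Finset.image_image]
          rfl
      · -- s i = 1 case
        have h1 : s i = 1 := by have := hs i; omega
        have hr0 : r = 0 := by omega
        subst hr0
        -- corr for deletion
        have corrdel : ∀ E : Finset (Fin n × ℕ), E ∈ (Γ.del p).faces ↔
            E.image e ∈ ((Δ.del i).expansion s).faces := by
          intro E
          rw [show ((Δ.del i).expansion s) = (Δ.expansion s).del (i, 0) from
            (del_expansion_one h1).symm]
          constructor
          · rintro ⟨hE, hpE⟩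
            refine ⟨(hcorr E).mp hE, ?_⟩
            rw [← hq]
            exact fun hmem => hpE ((hmemim E p).mp hmem)
          · rintro ⟨hE, hpE⟩
            refine ⟨(hcorr E).mpr hE, ?_⟩
            intro hmem
            exact hpE (hq ▸ Finset.mem_image_of_mem e hmem)
        refine IsVertexDecomposable.shed _ i (ihdel (Δ.del i) s hs e corrdel) ?_ ?_
        · -- link
          refine ihlink (Δ.link i) s hs e ?_
          intro E
          rw [show ((Δ.link i).expansion s) = (Δ.expansion s).link (i, 0) from
            (link_expansion (by omega)).symm]
          constructor
          · rintro ⟨hpE, hE⟩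
            refine ⟨?_, ?_⟩
            · rw [← hq]
              exact fun hmem => hpE ((hmemim E p).mp hmem)
            · have := (hcorr _).mp hE
              rwa [Finset.image_insert, hq] at this
          · rintro ⟨hpE, hE⟩
            refine ⟨?_, ?_⟩
            · intro hmem
              exact hpE (hq ▸ Finset.mem_image_of_mem e hmem)
            · apply (hcorr _).mpr
              rwa [Finset.image_insert, hq]
        · -- facet condition
          intro F hF
          obtain ⟨hF1, hFmax⟩ := hF
          obtain ⟨hFΔ, hFi⟩ := hF1
          -- bound on face cardinalities of Γ.del p
          have hbound : ∀ E ∈ (Γ.del p).faces, E.card ≤ n := by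
            rintro E ⟨hE, -⟩
            have hEe := (hcorr E).mp hE
            obtain ⟨hf, hc, hj⟩ := hEe
            have c1 : E.card = (E.image e).card :=
              (Finset.card_image_of_injective E e.injective).symm
            have c2 : ((E.image e).image Prod.fst).card = (E.image e).card :=
              Finset.card_image_of_injOn (fun a ha b hb hab => hj a ha b hb hab)
            have c3 : ((E.image e).image Prod.fst).card ≤ n := by
              have := Finset.card_le_univ ((E.image e).image Prod.fst)
              simpa using this
            omega
          -- lift F to a face of Γ.del p
          have hA : (F.image (fun j => ((j, 0) : Fin n × ℕ))) ∈
              ((Δ.del i).expansion s).faces := by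
            refine ⟨?_, ?_, ?_⟩
            · rw [Finset.image_image,
                show (Prod.fst ∘ fun j => ((j, 0) : Fin n × ℕ)) = id from rfl, Finset.image_id]
              exact (⟨hFΔ, hFi⟩ : F ∈ (Δ.del i).faces)
            · intro p' hp'
              obtain ⟨a, ha, rfl⟩ := Finset.mem_image.mp hp'
              exact hs a
            · intro p' hp' q' hq' hpq
              obtain ⟨a, ha, rfl⟩ := Finset.mem_image.mp hp'
              obtain ⟨b, hb, rfl⟩ := Finset.mem_image.mp hq'
              exact Prod.ext hpq rfl
          have hE₁ : (F.image (fun j => ((j, 0) : Fin n × ℕ))).image e.symm ∈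
              (Γ.del p).faces := by
            apply (corrdel _).mpr
            rw [Finset.image_image]
            simpa using hA
          obtain ⟨E₂, hE₂fac, hE₁₂⟩ := exists_facet_superset (Γ.del p) n hbound hE₁
          have hE₂Γ := hfacet E₂ hE₂fac
          have hB := (corrdel E₂).mp hE₂fac.1
          obtain ⟨hBf, hBc, hBj⟩ := hB
          have hFB : F ⊆ (E₂.image e).image Prod.fst := by
            intro g hg
            have h1 : e.symm (g, 0) ∈ (F.image (fun j => ((j, 0) : Fin n × ℕ))).image e.symm :=
              Finset.mem_image_of_mem _ (Finset.mem_image_of_mem _ hg)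
            have h2 : ((g, 0) : Fin n × ℕ) ∈ E₂.image e := by
              have := Finset.mem_image_of_mem e (hE₁₂ h1)
              rwa [e.apply_symm_apply] at this
            exact Finset.mem_image_of_mem _ h2
          have hFeq : F = (E₂.image e).image Prod.fst := hFmax _ hBf hFB
          refine ⟨hFΔ, ?_⟩
          intro G hG hFG
          by_contra hne
          obtain ⟨g, hgG, hgF⟩ := Finset.exists_of_ssubset (lt_of_le_of_ne hFG hne)
          -- build the extended face B'
          have hB' : (E₂.image e) ∪ (G \ F).image (fun j => ((j, 0) : Fin n × ℕ)) ∈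
              (Δ.expansion s).faces := by
            refine ⟨?_, ?_, ?_⟩
            · have himg : ((E₂.image e) ∪ (G \ F).image (fun j => ((j, 0) : Fin n × ℕ))).image
                  Prod.fst = G := by
                rw [Finset.image_union, ← hFeq, Finset.image_image,
                  show (Prod.fst ∘ fun j => ((j, 0) : Fin n × ℕ)) = id from rfl,
                  Finset.image_id, Finset.union_sdiff_of_subset hFG]
              rw [himg]
              exact hG
            · intro p' hp'
              rcases Finset.mem_union.mp hp' with h' | h'
              · exact hBc p' h'
              · obtain ⟨a, ha, rfl⟩ := Finset.mem_image.mp h'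
                exact hs a
            · intro p' hp' q' hq' hpq
              rcases Finset.mem_union.mp hp' with h' | h' <;>
                rcases Finset.mem_union.mp hq' with h'' | h''
              · exact hBj p' h' q' h'' hpq
              · exfalso
                obtain ⟨b, hb, rfl⟩ := Finset.mem_image.mp h''
                have : p'.1 ∈ F := by rw [hFeq]; exact Finset.mem_image_of_mem _ h'
                rw [hpq] at this
                exact (Finset.mem_sdiff.mp hb).2 this
              · exfalso
                obtain ⟨a, ha, rfl⟩ := Finset.mem_image.mp h'
                have : q'.1 ∈ F := by rw [hFeq]; exact Finset.mem_image_of_mem _ h''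
                rw [← hpq] at this
                exact (Finset.mem_sdiff.mp ha).2 this
              · obtain ⟨a, ha, rfl⟩ := Finset.mem_image.mp h'
                obtain ⟨b, hb, rfl⟩ := Finset.mem_image.mp h''
                exact Prod.ext hpq rfl
          have hE₃ : ((E₂.image e) ∪ (G \ F).image (fun j => ((j, 0) : Fin n × ℕ))).image
              e.symm ∈ Γ.faces := by
            apply (hcorr _).mpr
            rw [Finset.image_image]
            simpa using hB'
          have hE₂₃ : E₂ ⊆ ((E₂.image e) ∪ (G \ F).image (fun j => ((j, 0) : Fin n × ℕ))).image
              e.symm := by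
            intro x hx
            have : e x ∈ (E₂.image e) ∪ (G \ F).image (fun j => ((j, 0) : Fin n × ℕ)) :=
              Finset.mem_union_left _ (Finset.mem_image_of_mem e hx)
            have h4 := Finset.mem_image_of_mem e.symm this
            rwa [e.symm_apply_apply] at h4
          have heq := hE₂Γ.2 _ hE₃ hE₂₃
          have hgB : ((g, 0) : Fin n × ℕ) ∈ E₂.image e := by
            have hg' : ((g, 0) : Fin n × ℕ) ∈
                (E₂.image e) ∪ (G \ F).image (fun j => ((j, 0) : Fin n × ℕ)) :=
              Finset.mem_union_right _
                (Finset.mem_image_of_mem _ (Finset.mem_sdiff.mpr ⟨hgG, hgF⟩))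
            have h5 := Finset.mem_image_of_mem e.symm hg'
            rw [← heq] at h5
            have h6 := Finset.mem_image_of_mem e h5
            rwa [e.apply_symm_apply] at h6
          exact hgF (by rw [hFeq]; exact Finset.mem_image_of_mem _ hgB)
    · -- e p is not a valid copy: p in no face
      refine ihdel Δ s hs e ?_
      intro E
      constructor
      · rintro ⟨hE, -⟩
        exact (hcorr E).mp hE
      · intro hE
        refine ⟨(hcorr E).mpr hE, ?_⟩
        intro hpE
        obtain ⟨-, hc, -⟩ := hE
        exact hr (hc (e p) (Finset.mem_image_of_mem e hpE))

end SimplicialComplex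

open SimplicialComplex in
/-- `Δ` is vertex decomposable iff its expansion `Δ^{(s₁,…,sₙ)}`
is vertex decomposable, for any positive integers `s₁,…,sₙ`. -/
theorem expansion_vertexDecomposable_iff {n : ℕ} (Δ : SimplicialComplex (Fin n))
    (s : Fin n → ℕ) (hs : ∀ i, 0 < s i) :
    IsVertexDecomposable Δ ↔ IsVertexDecomposable (Δ.expansion s) := by
  constructor
  · exact fun h => expansion_vd_forward h s hs
  · intro h
    exact expansion_vd_backward _ h Δ s hs (Equiv.refl _) (by simp [SimplicialComplex.mem_expansion])
end

section
/- If Δ is a shellable simplicial complex on n vertices, then its expansion Δ^{(s_1,...,s_n)} is shellable for any positive integers s_1,...,s_n. -/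
open Finset

/-! The facets of `Δ^{(s)}` are the graphs `{(x, c x) | x ∈ G}` of choice functions `c` with
`c x < s x` over facets `G` of `Δ`. Order them lexicographically: first by the position of `G`
in a shelling of `Δ`, then lexicographically in `c`. If `E < E'` have different base facets
`F i < F j`, the shelling of `Δ` gives `v` and `F l` with `F j \ F l = {v}`; the graph of `c'`
restricted to `F l` (padded arbitrarily) then precedes `E'` and misses only `(v, c' v)`. If the
choice functions first differ at `w`, lowering `c' w` to `c w` gives an earlier facet missing
only `(w, c' w)`. -/

open Function

namespace Finset

variable {α β : Type*} [DecidableEq α] [DecidableEq β]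

def graphOn (f : α → β) (A : Finset α) : Finset (α × β) :=
  A.image fun x => (x, f x)

variable {f g : α → β} {A B : Finset α}

@[simp]
theorem mem_graphOn {p : α × β} : p ∈ A.graphOn f ↔ p.1 ∈ A ∧ f p.1 = p.2 := by
  obtain ⟨x, y⟩ := p
  simp [graphOn, and_comm]

theorem mk_mem_graphOn {a : α} (ha : a ∈ A) : (a, f a) ∈ A.graphOn f :=
  mem_image_of_mem _ ha

theorem graphOn_mono (h : A ⊆ B) : A.graphOn f ⊆ B.graphOn f :=
  image_subset_image h

@[simp]
theorem graphOn_singleton (a : α) : ({a} : Finset α).graphOn f = {(a, f a)} :=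
  image_singleton _ _

@[simp]
theorem image_fst_graphOn : (A.graphOn f).image Prod.fst = A := by
  ext x; simp

theorem graphOn_inj : A.graphOn f = B.graphOn g ↔ A = B ∧ Set.EqOn f g A := by
  constructor
  · intro h
    have hAB : A = B := by rw [← image_fst_graphOn (f := f) (A := A), h, image_fst_graphOn]
    refine ⟨hAB, fun x hx => ?_⟩
    have : (x, f x) ∈ B.graphOn g := h ▸ mk_mem_graphOn hx
    exact (mem_graphOn.mp this).2.symm
  · rintro ⟨rfl, h⟩
    ext ⟨x, y⟩
    simp only [mem_graphOn]
    exact and_congr_right fun hx => by rw [h hx]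

theorem graphOn_sdiff_graphOn :
    A.graphOn f \ B.graphOn g = {x ∈ A | x ∉ B ∨ f x ≠ g x}.graphOn f := by
  ext ⟨x, y⟩
  simp only [mem_sdiff, mem_graphOn, mem_filter]
  constructor
  · rintro ⟨⟨hx, rfl⟩, h⟩
    exact ⟨⟨hx, by tauto⟩, rfl⟩
  · rintro ⟨⟨hx, h⟩, rfl⟩
    exact ⟨⟨hx, rfl⟩, by tauto⟩

end Finset

namespace SimplicialComplex

variable {V : Type*} [DecidableEq V]

def IsShellingOrder {ι : Type*} [LT ι] (E : ι → Finset V) : Prop :=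
  ∀ i j, i < j → ∃ v ∈ E j, v ∉ E i ∧ ∃ l, l < j ∧ E j \ E l = {v}

theorem isShellable_of_linearOrder {Δ : SimplicialComplex V} {ι : Type*} [LinearOrder ι]
    [Finite ι] (E : ι → Finset V) (hinj : Injective E)
    (hfacet : ∀ G, Δ.IsFacet G ↔ ∃ i, E i = G) (hE : IsShellingOrder E) :
    Δ.IsShellable := by
  have := Fintype.ofFinite ι
  let e := monoEquivOfFin ι rfl
  refine ⟨_, E ∘ e, hinj.comp e.injective, fun G => (hfacet G).trans e.surjective.exists,
    fun i j hij => ?_⟩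
  obtain ⟨v, hvj, hvi, l, hlj, hl⟩ := hE (e i) (e j) (e.lt_iff_lt.mpr hij)
  exact ⟨v, hvj, hvi, e.symm l, by simpa using e.symm.lt_iff_lt.mpr hlj, by simpa using hl⟩

section ExpansionFaces

variable {n : ℕ} {Δ : SimplicialComplex (Fin n)} {s : Fin n → ℕ}

theorem graphOn_mem_expansion_faces {G : Finset (Fin n)} {f : Fin n → ℕ} (hG : G ∈ Δ.faces)
    (hf : ∀ x ∈ G, f x < s x) : G.graphOn f ∈ (Δ.expansion s).faces := by
  refine ⟨by rwa [image_fst_graphOn], fun p hp => ?_, fun p hp q hq hpq => ?_⟩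
  · rw [mem_graphOn] at hp
    exact hp.2 ▸ hf _ hp.1
  · rw [mem_graphOn] at hp hq
    exact Prod.ext hpq (by rw [← hp.2, ← hq.2, hpq])

theorem exists_eq_graphOn_of_mem_expansion_faces (hs : ∀ x, 0 < s x)
    {E : Finset (Fin n × ℕ)} (hE : E ∈ (Δ.expansion s).faces) :
    ∃ c : ∀ x, Fin (s x), E = (E.image Prod.fst).graphOn fun x => (c x : ℕ) := by
  obtain ⟨-, hbound, huniq⟩ := hE
  classical
  let c : ∀ x, Fin (s x) := fun x =>
    if h : ∃ p ∈ E, p.1 = x then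
      ⟨h.choose.2, (hbound _ h.choose_spec.1).trans_eq (congrArg s h.choose_spec.2)⟩
    else ⟨0, hs x⟩
  have hc : ∀ p ∈ E, (c p.1 : ℕ) = p.2 := by
    intro p hp
    have h : ∃ q ∈ E, q.1 = p.1 := ⟨p, hp, rfl⟩
    simp only [c, dif_pos h]
    exact congrArg Prod.snd (huniq _ h.choose_spec.1 _ hp h.choose_spec.2)
  refine ⟨c, Finset.ext fun p => ⟨fun hp => ?_, fun hp => ?_⟩⟩
  · exact mem_graphOn.mpr ⟨mem_image_of_mem _ hp, hc p hp⟩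
  · obtain ⟨hp1, hp2⟩ := mem_graphOn.mp hp
    obtain ⟨q, hq, hqp⟩ := mem_image.mp hp1
    rwa [← Prod.ext hqp (by rw [← hc q hq, hqp, hp2])]

theorem isFacet_expansion_iff (hs : ∀ x, 0 < s x) {E : Finset (Fin n × ℕ)} :
    (Δ.expansion s).IsFacet E ↔
      ∃ G, Δ.IsFacet G ∧ ∃ c : ∀ x, Fin (s x), E = G.graphOn fun x => (c x : ℕ) := by
  constructor
  · rintro ⟨hE, hmax⟩
    obtain ⟨c, hc⟩ := exists_eq_graphOn_of_mem_expansion_faces hs hE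
    refine ⟨_, ⟨hE.1, fun H hH hGH => ?_⟩, c, hc⟩
    have hEH := hmax _ (graphOn_mem_expansion_faces hH fun x _ => (c x).isLt)
      (hc.trans_subset (graphOn_mono hGH))
    rw [hEH, image_fst_graphOn]
  · rintro ⟨G, hG, c, rfl⟩
    refine ⟨graphOn_mem_expansion_faces hG.1 fun x _ => (c x).isLt, fun E hE hsub => ?_⟩
    have hGE : G = E.image Prod.fst :=
      hG.2 _ hE.1 (by simpa using image_subset_image (f := Prod.fst) hsub)
    refine hsub.antisymm fun p hp => ?_
    have hp1 : p.1 ∈ G := hGE ▸ mem_image_of_mem _ hp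
    have hpc := hE.2.2 p hp _ (hsub (mk_mem_graphOn hp1)) rfl
    exact mem_graphOn.mpr ⟨hp1, (congrArg Prod.snd hpc).symm⟩

end ExpansionFaces

variable {n m : ℕ} (s : Fin n → ℕ) (F : Fin m → Finset (Fin n))

/-- An index `(i, c)` of a facet of the expansion: `c x` is the copy of `x` chosen for `x ∈ F i`.
It is normalised to `0` off `F i`, so that distinct indices give distinct facets. -/
@[ext]
structure ExpansionIndex where
  base : Fin m
  choice : ∀ x, Fin (s x)
  choice_eq_zero : ∀ x ∉ F base, (choice x : ℕ) = 0

namespace ExpansionIndex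

variable {s F}

theorem toProd_injective :
    Injective fun p : ExpansionIndex s F => (p.base, p.choice) := fun _ _ h =>
  ExpansionIndex.ext (congrArg Prod.fst h) (congrArg Prod.snd h)

noncomputable instance : LinearOrder (ExpansionIndex s F) :=
  LinearOrder.lift' (fun p => toLex (p.base, toLex p.choice)) fun _ _ h =>
    toProd_injective (by simpa using h)

instance : Finite (ExpansionIndex s F) := Finite.of_injective _ toProd_injective

theorem lt_iff {p q : ExpansionIndex s F} :
    p < q ↔ p.base < q.base ∨ p.base = q.base ∧ toLex p.choice < toLex q.choice :=
  Prod.Lex.toLex_lt_toLex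

def facet (p : ExpansionIndex s F) : Finset (Fin n × ℕ) :=
  (F p.base).graphOn fun x => (p.choice x : ℕ)

theorem facet_injective (hF : Injective F) : Injective (facet (s := s) (F := F)) := by
  intro p q h
  obtain ⟨hpq, hc⟩ := graphOn_inj.mp h
  have hi := hF hpq
  refine ExpansionIndex.ext hi (funext fun x => Fin.ext ?_)
  by_cases hx : x ∈ F p.base
  · exact hc hx
  · rw [p.choice_eq_zero x hx, q.choice_eq_zero x (hi ▸ hx)]

def ofChoice (hs : ∀ x, 0 < s x) (i : Fin m) (c : ∀ x, Fin (s x)) : ExpansionIndex s F :=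
  ⟨i, fun x => if x ∈ F i then c x else ⟨0, hs x⟩, fun x hx => by simp [hx]⟩

theorem facet_ofChoice (hs : ∀ x, 0 < s x) (i : Fin m) (c : ∀ x, Fin (s x)) :
    (ofChoice hs i c : ExpansionIndex s F).facet = (F i).graphOn fun x => (c x : ℕ) :=
  graphOn_inj.mpr ⟨rfl, fun x (hx : x ∈ F i) => by simp [ofChoice, hx]⟩

theorem isFacet_expansion_iff_exists_facet {Δ : SimplicialComplex (Fin n)} (hs : ∀ x, 0 < s x)
    (hF : ∀ G, Δ.IsFacet G ↔ ∃ i, F i = G) {E : Finset (Fin n × ℕ)} :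
    (Δ.expansion s).IsFacet E ↔ ∃ p : ExpansionIndex s F, p.facet = E := by
  rw [isFacet_expansion_iff hs]
  constructor
  · rintro ⟨G, hG, c, rfl⟩
    obtain ⟨i, rfl⟩ := (hF G).mp hG
    exact ⟨ofChoice hs i c, facet_ofChoice hs i c⟩
  · rintro ⟨p, rfl⟩
    exact ⟨_, (hF _).mpr ⟨_, rfl⟩, p.choice, rfl⟩

theorem exists_facet_sdiff_eq_singleton_of_base_lt (hs : ∀ x, 0 < s x) (hF : IsShellingOrder F)
    {p q : ExpansionIndex s F} (h : p.base < q.base) :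
    ∃ v ∈ q.facet, v ∉ p.facet ∧ ∃ r, r < q ∧ q.facet \ r.facet = {v} := by
  obtain ⟨v, hvq, hvp, l, hlq, hl⟩ := hF _ _ h
  refine ⟨(v, q.choice v), mk_mem_graphOn hvq, fun hv => hvp (mem_graphOn.mp hv).1,
    ofChoice hs l q.choice, lt_iff.mpr (Or.inl hlq), ?_⟩
  rw [facet_ofChoice, facet, graphOn_sdiff_graphOn]
  simp only [ne_eq, not_true_eq_false, or_false]
  rw [← sdiff_eq_filter, hl, graphOn_singleton]

theorem exists_facet_sdiff_eq_singleton_of_choice_lt {p q : ExpansionIndex s F}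
    (h : toLex p.choice < toLex q.choice) :
    ∃ v ∈ q.facet, v ∉ p.facet ∧ ∃ r, r < q ∧ q.facet \ r.facet = {v} := by
  obtain ⟨w, -, hw⟩ := h
  replace hw : p.choice w < q.choice w := hw
  have hwq : w ∈ F q.base := by
    by_contra hw'
    have := q.choice_eq_zero w hw'
    omega
  let r : ExpansionIndex s F := ⟨q.base, update q.choice w (p.choice w), fun x hx => by
    rw [update_of_ne (ne_of_mem_of_not_mem hwq hx).symm]
    exact q.choice_eq_zero x hx⟩
  refine ⟨(w, q.choice w), mk_mem_graphOn hwq,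
    fun hv => hw.ne (Fin.ext (mem_graphOn.mp hv).2), r,
    lt_iff.mpr (Or.inr ⟨rfl, Pi.toLex_update_lt_self_iff.mpr hw⟩), ?_⟩
  rw [facet, facet, graphOn_sdiff_graphOn]
  convert graphOn_singleton (f := fun x => (q.choice x : ℕ)) w using 2
  ext x
  by_cases hx : x = w
  · subst hx
    simpa [r, hwq, Fin.val_inj] using hw.ne'
  · simp [r, hx]

theorem isShellingOrder_facet (hs : ∀ x, 0 < s x) (hF : IsShellingOrder F) :
    IsShellingOrder (facet : ExpansionIndex s F → _) := fun _ _ hpq =>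
  (lt_iff.mp hpq).elim (exists_facet_sdiff_eq_singleton_of_base_lt hs hF)
    fun h => exists_facet_sdiff_eq_singleton_of_choice_lt h.2

end ExpansionIndex

end SimplicialComplex

open SimplicialComplex in
/-- if `Δ` is a shellable simplicial complex on `n` vertices, then
its expansion `Δ^{(s₁,…,sₙ)}` is shellable for any positive integers `s₁,…,sₙ`. -/
theorem expansion_isShellable {n : ℕ} (Δ : SimplicialComplex (Fin n))
    (s : Fin n → ℕ) (hs : ∀ i, 0 < s i) (hΔ : Δ.IsShellable) :
    (Δ.expansion s).IsShellable := by
  obtain ⟨m, F, hFinj, hFfacet, hF⟩ := hΔ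
  exact isShellable_of_linearOrder ExpansionIndex.facet (ExpansionIndex.facet_injective hFinj)
    (fun _ => ExpansionIndex.isFacet_expansion_iff_exists_facet hs hFfacet)
    (ExpansionIndex.isShellingOrder_facet hs hF)
end

section
/- Let F be a facet of a simplicial complex Δ containing vertex x_i with s_i > 1, and suppose Δ = ⟨F⟩ is a simplex. Then the link of x_{i1} in the expansion Δ^{(s_1,...,s_n)} equals the expansion of the simplex ⟨F \ {x_i}⟩ with multiplicities (s_1,...,s_{i-1}, s_{i+1},...,s_n), and the deletion of x_{i1} equals Δ^{(s_1,...,s_{i-1}, s_i - 1, s_{i+1},...,s_n)}. -/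
open Finset

theorem SimplicialComplex.ext' {V : Type*} {Δ₁ Δ₂ : SimplicialComplex V}
    (h : Δ₁.faces = Δ₂.faces) : Δ₁ = Δ₂ := by
  cases Δ₁; cases Δ₂; simpa using h

open SimplicialComplex in
/-- let `Δ = ⟨F⟩` be a simplex, `x_i ∈ F` a vertex with `s i > 1`.
Recall that in our encoding of the expansion the copy `x_{ij}` of `x_i`
(`1 ≤ j ≤ s i`) is the pair `(i, s i - j)`; in particular `x_{i1} = (i, s i - 1)`.
Then the link of `x_{i1}` in `Δ^{(s₁,…,sₙ)}` is the expansion of the simplex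
`⟨F \ {x_i}⟩` (with the multiplicities of the remaining vertices, vertex `x_i`
no longer occurring), and the deletion of `x_{i1}` is `Δ^{(s₁,…,s_i - 1,…,sₙ)}`. -/
theorem expansion_link_and_del_of_simplex {n : ℕ} (F : Finset (Fin n))
    (Δ : SimplicialComplex (Fin n)) (hΔ : Δ.faces = {G | G ⊆ F})
    (i : Fin n) (hi : i ∈ F) (s : Fin n → ℕ) (hs : ∀ j, 0 < s j) (hsi : 1 < s i) :
    (Δ.expansion s).link (i, s i - 1) = (SimplicialComplex.simplex (F.erase i)).expansion s ∧
    (Δ.expansion s).del (i, s i - 1) = Δ.expansion (Function.update s i (s i - 1)) := by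
  constructor
  · apply SimplicialComplex.ext'
    ext E
    simp only [link, expansion, simplex, hΔ, Set.mem_setOf_eq]
    constructor
    · rintro ⟨hx, h1, h2, h3⟩
      have hiE : ∀ p ∈ E, p.1 ≠ i := by
        intro p hp hpi
        exact hx (by
          have := h3 p (Finset.mem_insert_of_mem hp) (i, s i - 1) (Finset.mem_insert_self _ _) hpi
          rwa [← this])
      refine ⟨?_, fun p hp => h2 p (Finset.mem_insert_of_mem hp),
        fun p hp q hq => h3 p (Finset.mem_insert_of_mem hp) q (Finset.mem_insert_of_mem hq)⟩
      intro j hj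
      simp only [Finset.mem_image] at hj
      obtain ⟨p, hp, rfl⟩ := hj
      refine Finset.mem_erase.mpr ⟨hiE p hp, ?_⟩
      exact h1 (Finset.mem_image_of_mem _ (Finset.mem_insert_of_mem hp))
    · rintro ⟨h1, h2, h3⟩
      have hiE : ∀ p ∈ E, p.1 ≠ i := by
        intro p hp hpi
        have := h1 (Finset.mem_image_of_mem Prod.fst hp)
        rw [hpi] at this
        exact (Finset.mem_erase.mp this).1 rfl
      refine ⟨fun hx => hiE _ hx rfl, ?_, ?_, ?_⟩
      · intro j hj
        simp only [Finset.image_insert, Finset.mem_insert] at hj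
        rcases hj with rfl | hj
        · exact hi
        · exact Finset.mem_of_mem_erase (h1 hj)
      · intro p hp
        rcases Finset.mem_insert.mp hp with rfl | hp
        · exact Nat.sub_lt (hs i) one_pos
        · exact h2 p hp
      · intro p hp q hq hpq
        rcases Finset.mem_insert.mp hp with rfl | hp <;>
          rcases Finset.mem_insert.mp hq with rfl | hq
        · rfl
        · exact absurd hpq.symm (hiE q hq)
        · exact absurd hpq (hiE p hp)
        · exact h3 p hp q hq hpq
  · apply SimplicialComplex.ext'
    ext E
    simp only [del, expansion, hΔ, Set.mem_setOf_eq]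
    constructor
    · rintro ⟨⟨h1, h2, h3⟩, hx⟩
      refine ⟨h1, ?_, h3⟩
      intro p hp
      rcases eq_or_ne p.1 i with hpi | hpi
      · rw [hpi, Function.update_self]
        have h2p := h2 p hp
        rw [hpi] at h2p
        have : p.2 ≠ s i - 1 := by
          intro h
          apply hx
          have : p = (i, s i - 1) := Prod.ext hpi h
          rwa [← this]
        omega
      · rw [Function.update_of_ne hpi]
        exact h2 p hp
    · rintro ⟨h1, h2, h3⟩
      refine ⟨⟨h1, ?_, h3⟩, ?_⟩
      · intro p hp
        rcases eq_or_ne p.1 i with hpi | hpi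
        · have := h2 p hp
          rw [hpi] at this ⊢
          rw [Function.update_self] at this
          omega
        · have := h2 p hp
          rwa [Function.update_of_ne hpi] at this
      · intro hx
        have := h2 _ hx
        simp only [Function.update_self] at this
        omega
end

section
/- Let Δ be a simplicial complex on vertices {x_1,...,x_n} with s_1 = 1. Then in the expansion Δ^{(s_1,...,s_n)}, the link of x_{11} equals the expansion (lk_Δ(x_1))^{(s_2,...,s_n)} and the deletion of x_{11} equals (del_Δ(x_1))^{(s_2,...,s_n)}; if instead s_1 > 1 then the deletion of x_{11} equals Δ^{(s_1 - 1, s_2,...,s_n)}. -/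
open Finset

theorem SimplicialComplex.ext'_s7 {V : Type*} {Δ Γ : SimplicialComplex V}
    (h : Δ.faces = Γ.faces) : Δ = Γ := by
  cases Δ; cases Γ; simpa using h

open SimplicialComplex in
/-- let `Δ` be a simplicial complex on `{x_1,…,x_n}` (here the
vertex `x_1` is `(0 : Fin (n+1))`).  In our encoding of the expansion the copy
`x_{ij}` (`1 ≤ j ≤ s i`) is the pair `(i, s i - j)`, so `x_{11} = (0, s 0 - 1)`.
If `s 0 = 1` (so `x_{11} = (0,0)`), then the link of `x_{11}` in the expansion is
`(lk_Δ(x_1))^{(s₂,…,sₙ)}` and the deletion is `(del_Δ(x_1))^{(s₂,…,sₙ)}`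
(vertex `x_1` no longer occurs in either complex, so the multiplicity function
is unchanged there); if instead `s 0 > 1`, the deletion of `x_{11}` is
`Δ^{(s₁ - 1, s₂,…,sₙ)}`. -/
theorem expansion_link_and_del_first_vertex {n : ℕ} (Δ : SimplicialComplex (Fin (n + 1)))
    (s : Fin (n + 1) → ℕ) (hs : ∀ i, 0 < s i) :
    (s 0 = 1 →
      (Δ.expansion s).link ((0 : Fin (n + 1)), 0) = (Δ.link 0).expansion s ∧
      (Δ.expansion s).del ((0 : Fin (n + 1)), 0) = (Δ.del 0).expansion s) ∧
    (1 < s 0 →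
      (Δ.expansion s).del ((0 : Fin (n + 1)), s 0 - 1) =
        Δ.expansion (Function.update s 0 (s 0 - 1))) := by
  constructor
  · intro h1
    constructor
    · apply SimplicialComplex.ext'_s7
      ext E
      simp only [SimplicialComplex.link, SimplicialComplex.expansion, Set.mem_setOf_eq]
      constructor
      · rintro ⟨hE0, hface, hlt, hinj⟩
        refine ⟨⟨?_, ?_⟩, fun p hp => hlt p (Finset.mem_insert_of_mem hp),
          fun p hp q hq => hinj p (Finset.mem_insert_of_mem hp) q (Finset.mem_insert_of_mem hq)⟩
        · intro h
          obtain ⟨p, hp, hp1⟩ := Finset.mem_image.mp h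
          exact hE0 (hinj p (Finset.mem_insert_of_mem hp) ((0 : Fin (n+1)), 0)
            (Finset.mem_insert_self _ _) hp1 ▸ hp)
        · rw [Finset.image_insert] at hface
          exact hface
      · rintro ⟨⟨h0, hins⟩, hlt, hinj⟩
        have hE0 : ((0 : Fin (n+1)), 0) ∉ E := fun h => h0 (Finset.mem_image.mpr ⟨_, h, rfl⟩)
        refine ⟨hE0, ?_, ?_, ?_⟩
        · rw [Finset.image_insert]; exact hins
        · intro p hp
          rcases Finset.mem_insert.mp hp with h | h
          · subst h; exact hs 0
          · exact hlt p h
        · intro p hp q hq hpq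
          rcases Finset.mem_insert.mp hp with h | h <;>
            rcases Finset.mem_insert.mp hq with h' | h'
          · rw [h, h']
          · exact absurd (Finset.mem_image.mpr ⟨q, h', by rw [← hpq, h]⟩) h0
          · exact absurd (Finset.mem_image.mpr ⟨p, h, by rw [hpq, h']⟩) h0
          · exact hinj p h q h' hpq
    · apply SimplicialComplex.ext'_s7
      ext E
      simp only [SimplicialComplex.del, SimplicialComplex.expansion, Set.mem_setOf_eq]
      constructor
      · rintro ⟨⟨hface, hlt, hinj⟩, hE0⟩
        refine ⟨⟨hface, ?_⟩, hlt, hinj⟩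
        intro h
        obtain ⟨p, hp, hp1⟩ := Finset.mem_image.mp h
        have h2 : p.2 = 0 := by have := hlt p hp; rw [hp1, h1] at this; omega
        have : p = ((0 : Fin (n+1)), 0) := Prod.ext_iff.mpr ⟨hp1, h2⟩
        exact hE0 (this ▸ hp)
      · rintro ⟨⟨hface, h0⟩, hlt, hinj⟩
        exact ⟨⟨hface, hlt, hinj⟩, fun h => h0 (Finset.mem_image.mpr ⟨_, h, rfl⟩)⟩
  · intro h1
    apply SimplicialComplex.ext'_s7
    ext E
    simp only [SimplicialComplex.del, SimplicialComplex.expansion, Set.mem_setOf_eq]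
    constructor
    · rintro ⟨⟨hface, hlt, hinj⟩, hE0⟩
      refine ⟨hface, ?_, hinj⟩
      intro p hp
      by_cases h : p.1 = 0
      · rw [h, Function.update_self]
        have hlt' := hlt p hp
        rw [h] at hlt'
        have : p.2 ≠ s 0 - 1 := by
          intro hp2
          have hpe : p = ((0 : Fin (n+1)), s 0 - 1) := Prod.ext_iff.mpr ⟨h, hp2⟩
          exact hE0 (hpe ▸ hp)
        omega
      · rw [Function.update_of_ne h]
        exact hlt p hp
    · rintro ⟨hface, hlt, hinj⟩
      refine ⟨⟨hface, ?_, hinj⟩, ?_⟩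
      · intro p hp
        have := hlt p hp
        by_cases h : p.1 = 0
        · rw [h, Function.update_self] at this; rw [h]; omega
        · rwa [Function.update_of_ne h] at this
      · intro h
        have := hlt _ h
        rw [Function.update_self] at this
        omega
end

section
/- A pure one-dimensional simplicial complex Δ is connected if and only if Δ is vertex decomposable. -/
open Finset

namespace SimplicialComplex

/-- A simplicial complex is connected if any two of its vertices are joined by
a path of edges (faces with two elements). -/
def IsConnected [DecidableEq V] (Δ : SimplicialComplex V) : Prop :=
  ∀ x y : V, ({x} : Finset V) ∈ Δ.faces → ({y} : Finset V) ∈ Δ.faces →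
    Relation.ReflTransGen (fun a b => ({a, b} : Finset V) ∈ Δ.faces) x y

end SimplicialComplex

/-!
If `Δ` is vertex decomposable, induct on the decomposition: the facets of `del_Δ(x)` are facets
of `Δ`, hence edges, so `del_Δ(x)` is connected, and `x`, lying on an edge, is adjacent to one of
its vertices.

Conversely, let `x` be a vertex at maximal distance from a fixed vertex `r`. Shortest paths from
`r` to the other vertices avoid `x`, so `del_Δ(x)` is connected, with one vertex less. When it
still has two vertices none of its facets is a point, so they are edges and hence facets of `Δ`;
and `lk_Δ(x)` is zero-dimensional, and zero-dimensional complexes are vertex decomposable by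
shedding their points one at a time.
-/

namespace SimpleGraph

variable {V : Type*} {G : SimpleGraph V}

theorem Walk.notMem_support_of_length_eq_dist [DecidableEq V] {r x y : V} (w : G.Walk r y)
    (hw : w.length = G.dist r y) (hxy : x ≠ y) (hfar : G.dist r y ≤ G.dist r x) :
    x ∉ w.support := by
  intro hx
  have hr : G.dist r x ≤ (w.takeUntil x hx).length := dist_le _
  have hy : (w.dropUntil x hx).length ≠ 0 := fun h => hxy (Walk.eq_of_length_eq_zero h)
  have hsplit := congrArg Walk.length (w.take_spec hx)
  rw [Walk.length_append] at hsplit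
  omega

theorem exists_mem_forall_exists_walk_notMem_support (s : Finset V) (hs : s.Nonempty) {r : V}
    (hreach : ∀ y ∈ s, G.Reachable r y) :
    ∃ x ∈ s, ∀ y ∈ s, y ≠ x → ∃ w : G.Walk r y, x ∉ w.support := by
  classical
  obtain ⟨x, hx, hfar⟩ := s.exists_max_image (G.dist r) hs
  refine ⟨x, hx, fun y hy hyx => ?_⟩
  obtain ⟨w, hw⟩ := (hreach y hy).exists_walk_length_eq_dist
  exact ⟨w, w.notMem_support_of_length_eq_dist hw hyx.symm (hfar y hy)⟩

end SimpleGraph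

namespace SimplicialComplex

open SimpleGraph

variable {V : Type*} {Δ : SimplicialComplex V} {F : Finset V} {x : V}

theorem empty_mem_faces (hne : Δ.faces.Nonempty) : ∅ ∈ Δ.faces :=
  let ⟨_, hF⟩ := hne
  Δ.down_closed hF (empty_subset _)

theorem IsFacet.nonempty {v : V} (hF : Δ.IsFacet F) (hv : {v} ∈ Δ.faces) : F.Nonempty := by
  rw [nonempty_iff_ne_empty]
  rintro rfl
  exact singleton_ne_empty v (hF.2 _ hv (empty_subset _)).symm

section Finite

variable [Finite V]

theorem exists_isFacet_superset (hF : F ∈ Δ.faces) : ∃ G, Δ.IsFacet G ∧ F ⊆ G := by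
  obtain ⟨G, hFG, hG⟩ := (Set.toFinite Δ.faces).exists_le_maximal hF
  exact ⟨G, ⟨hG.1, fun H hH hGH => le_antisymm hGH (hG.2 hH hGH)⟩, hFG⟩

theorem card_le_of_forall_isFacet {n : ℕ} (hdim : ∀ G, Δ.IsFacet G → G.card ≤ n)
    (hF : F ∈ Δ.faces) : F.card ≤ n :=
  let ⟨G, hG, hFG⟩ := exists_isFacet_superset hF
  (card_le_card hFG).trans (hdim G hG)

noncomputable def vertices (Δ : SimplicialComplex V) : Finset V :=
  (Set.toFinite {v | ({v} : Finset V) ∈ Δ.faces}).toFinset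

@[simp]
theorem mem_vertices {v : V} : v ∈ Δ.vertices ↔ {v} ∈ Δ.faces :=
  Set.Finite.mem_toFinset _

theorem subset_vertices (hF : F ∈ Δ.faces) : F ⊆ Δ.vertices := fun _ hv =>
  mem_vertices.2 (Δ.down_closed hF (singleton_subset_iff.2 hv))

theorem vertices_mem_faces_of_card_le_one (hne : Δ.faces.Nonempty) (h : Δ.vertices.card ≤ 1) :
    Δ.vertices ∈ Δ.faces := by
  rcases Δ.vertices.eq_empty_or_nonempty with hempty | ⟨v, hv⟩
  · exact hempty ▸ empty_mem_faces hne
  · rw [eq_singleton_iff_unique_mem.2 ⟨hv, fun w hw => card_le_one.1 h w hw v hv⟩]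
    exact mem_vertices.1 hv

end Finite

variable [DecidableEq V]

theorem IsFacet.of_del (hF : (Δ.del x).IsFacet F) (hx : insert x F ∉ Δ.faces) : Δ.IsFacet F :=
  ⟨hF.1.1, fun G hG hFG =>
    hF.2 G ⟨hG, fun hxG => hx (Δ.down_closed hG (insert_subset hxG hFG))⟩ hFG⟩

theorem empty_mem_link (hx : {x} ∈ Δ.faces) : ∅ ∈ (Δ.link x).faces :=
  ⟨notMem_empty x, by rwa [insert_empty]⟩

theorem card_insert_of_mem_link (hF : F ∈ (Δ.link x).faces) : (insert x F).card = F.card + 1 :=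
  card_insert_of_notMem hF.1

def graph (Δ : SimplicialComplex V) : SimpleGraph V where
  Adj a b := a ≠ b ∧ ({a, b} : Finset V) ∈ Δ.faces
  symm := ⟨fun _ _ h => ⟨h.1.symm, by rw [pair_comm]; exact h.2⟩⟩
  loopless := ⟨fun _ h => h.1 rfl⟩

theorem graph_del_le : (Δ.del x).graph ≤ Δ.graph := fun _ _ h => ⟨h.1, h.2.1⟩

theorem reflTransGen_iff_reachable {a b : V} :
    Relation.ReflTransGen (fun a b => ({a, b} : Finset V) ∈ Δ.faces) a b ↔
      Δ.graph.Reachable a b := by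
  rw [reachable_iff_reflTransGen]
  refine ⟨fun h => ?_, fun h => Relation.ReflTransGen.mono (fun _ _ h => h.2) _ _ h⟩
  induction h with
  | refl => rfl
  | @tail c d _ hcd ih =>
    by_cases h : c = d
    · exact h ▸ ih
    · exact ih.tail ⟨h, hcd⟩

theorem isConnected_iff_reachable :
    Δ.IsConnected ↔
      ∀ a b : V, {a} ∈ Δ.faces → {b} ∈ Δ.faces → Δ.graph.Reachable a b := by
  simp only [IsConnected, reflTransGen_iff_reachable]

theorem reachable_del_of_notMem_support {a b : V} (w : Δ.graph.Walk a b)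
    (hx : x ∉ w.support) : (Δ.del x).graph.Reachable a b := by
  induction w with
  | nil => rfl
  | @cons a c b hac w ih =>
    rw [Walk.support_cons, List.mem_cons, not_or] at hx
    have hxc : x ≠ c := fun h => hx.2 (h ▸ w.start_mem_support)
    have hadj : (Δ.del x).graph.Adj a c :=
      ⟨hac.1, hac.2, by simpa [eq_comm] using ⟨hx.1, hxc⟩⟩
    exact hadj.reachable.trans (ih hx.2)

variable [Finite V]

theorem vertices_del : (Δ.del x).vertices = Δ.vertices.erase x := by
  ext v
  simp only [mem_vertices, mem_erase, del, Set.mem_ofPred_eq, mem_singleton]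
  exact and_comm.trans (and_congr_left' ne_comm)

theorem isVertexDecomposable_of_vertices_mem (h : Δ.vertices ∈ Δ.faces) :
    IsVertexDecomposable Δ :=
  .simplex Δ Δ.vertices (Set.ext fun _ => ⟨subset_vertices, Δ.down_closed h⟩)

theorem isVertexDecomposable_of_card_le_one (hne : Δ.faces.Nonempty)
    (hdim : ∀ F ∈ Δ.faces, F.card ≤ 1) : IsVertexDecomposable Δ := by
  induction hn : Δ.vertices.card using Nat.strong_induction_on generalizing Δ with
  | _ n ih =>
  by_cases hsmall : Δ.vertices.card ≤ 1
  · exact isVertexDecomposable_of_vertices_mem (vertices_mem_faces_of_card_le_one hne hsmall)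
  obtain ⟨x, hx, y, hy, hxy⟩ := one_lt_card.1 (not_le.1 hsmall)
  have hdel : IsVertexDecomposable (Δ.del x) := by
    refine ih _ ?_ ⟨∅, empty_mem_faces hne, notMem_empty x⟩ (fun F hF => hdim F hF.1) rfl
    rw [vertices_del, card_erase_of_mem hx]
    omega
  have hlink : IsVertexDecomposable (Δ.link x) := by
    refine .simplex _ ∅ (Set.ext fun F => ⟨fun hF => ?_, fun hF => ?_⟩)
    · have := hdim _ hF.2
      rw [card_insert_of_mem_link hF] at this
      exact (card_eq_zero.1 (by omega) : F = ∅).subset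
    · exact subset_empty.1 hF ▸ empty_mem_link (mem_vertices.1 hx)
  refine .shed Δ x hdel hlink fun F hF => hF.of_del fun hxF => ?_
  have hyF : ({y} : Finset V) ∈ (Δ.del x).faces := ⟨mem_vertices.1 hy, by simpa using hxy⟩
  have := hdim _ hxF
  rw [card_insert_of_notMem hF.1.2] at this
  exact (hF.nonempty hyF).ne_empty (card_eq_zero.1 (by omega))

theorem IsConnected.exists_isConnected_del (hconn : Δ.IsConnected)
    (hne : Δ.vertices.Nonempty) : ∃ x ∈ Δ.vertices, (Δ.del x).IsConnected := by
  rw [isConnected_iff_reachable] at hconn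
  obtain ⟨r, hr⟩ := hne
  obtain ⟨x, hx, havoid⟩ := exists_mem_forall_exists_walk_notMem_support Δ.vertices ⟨r, hr⟩
    fun y hy => hconn r y (mem_vertices.1 hr) (mem_vertices.1 hy)
  have hreach : ∀ y, {y} ∈ (Δ.del x).faces → (Δ.del x).graph.Reachable r y := fun y hy =>
    let ⟨w, hw⟩ := havoid y (mem_vertices.2 hy.1) (by simpa [eq_comm] using hy.2)
    reachable_del_of_notMem_support w hw
  refine ⟨x, hx, isConnected_iff_reachable.2 fun a b ha hb => ?_⟩
  exact (hreach a ha).symm.trans (hreach b hb)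

theorem IsConnected.two_le_card_of_isFacet (hconn : Δ.IsConnected)
    (hv : 1 < Δ.vertices.card) (hF : Δ.IsFacet F) : 2 ≤ F.card := by
  by_contra! hlt
  obtain ⟨a, ha, b, hb, hab⟩ := one_lt_card.1 hv
  obtain ⟨c, hc⟩ := hF.nonempty (mem_vertices.1 ha)
  have hFc : F = {c} :=
    eq_singleton_iff_unique_mem.2 ⟨hc, fun d hd => card_le_one.1 (by omega) d hd c hc⟩
  obtain ⟨d, hd, hdc⟩ : ∃ d ∈ Δ.vertices, c ≠ d := by
    rcases eq_or_ne c a with rfl | hca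
    exacts [⟨b, hb, hab⟩, ⟨a, ha, hca⟩]
  obtain ⟨w⟩ := isConnected_iff_reachable.1 hconn c d (hFc ▸ hF.1) (mem_vertices.1 hd)
  have hadj := w.adj_snd (Walk.not_nil_of_ne hdc)
  have hmem : w.snd ∈ F := by
    rw [hF.2 _ hadj.2 (by simp [hFc])]
    simp
  rw [hFc, mem_singleton] at hmem
  exact hadj.1 hmem.symm

theorem IsConnected.isVertexDecomposable (hconn : Δ.IsConnected)
    (hne : Δ.faces.Nonempty) (hpure : ∀ F, Δ.IsFacet F → F.card = 2) :
    IsVertexDecomposable Δ := by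
  induction hn : Δ.vertices.card using Nat.strong_induction_on generalizing Δ with
  | _ n ih =>
  have hdim : ∀ F ∈ Δ.faces, F.card ≤ 2 := fun _ =>
    card_le_of_forall_isFacet fun G hG => (hpure G hG).le
  obtain ⟨E, hE, -⟩ := exists_isFacet_superset (empty_mem_faces hne)
  by_cases hsmall : n ≤ 2
  · have hEv : E = Δ.vertices :=
      eq_of_subset_of_card_le (subset_vertices hE.1) (by rw [hpure E hE]; omega)
    exact isVertexDecomposable_of_vertices_mem (hEv ▸ hE.1)
  obtain ⟨x, hx, hdelconn⟩ := hconn.exists_isConnected_del (card_pos.1 (by omega))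
  have hdelcard : (Δ.del x).vertices.card = n - 1 := by
    rw [vertices_del, card_erase_of_mem hx, hn]
  have hshed : ∀ F, (Δ.del x).IsFacet F → Δ.IsFacet F := fun F hF => hF.of_del fun hxF => by
    have h2 := hdelconn.two_le_card_of_isFacet (by omega) hF
    have h3 := hdim _ hxF
    rw [card_insert_of_notMem hF.1.2] at h3
    omega
  refine .shed Δ x (ih _ (by omega) hdelconn ⟨∅, empty_mem_faces hne, notMem_empty x⟩
    (fun F hF => hpure F (hshed F hF)) hdelcard) ?_ hshed
  refine isVertexDecomposable_of_card_le_one ⟨∅, empty_mem_link (mem_vertices.1 hx)⟩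
    fun F hF => ?_
  have := hdim _ hF.2
  rw [card_insert_of_mem_link hF] at this
  omega

theorem exists_graph_adj (hfacet : ∀ F, Δ.IsFacet F → 2 ≤ F.card)
    (hx : {x} ∈ Δ.faces) : ∃ z, Δ.graph.Adj x z := by
  obtain ⟨G, hG, hxG⟩ := exists_isFacet_superset hx
  obtain ⟨z, hz, hzx⟩ := exists_mem_ne (hfacet G hG) x
  exact ⟨z, hzx.symm, Δ.down_closed hG.1 (insert_subset (singleton_subset_iff.1 hxG)
    (singleton_subset_iff.2 hz))⟩

theorem IsVertexDecomposable.isConnected (h : IsVertexDecomposable Δ)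
    (hfacet : ∀ F, Δ.IsFacet F → 2 ≤ F.card) : Δ.IsConnected := by
  induction h with
  | simplex Δ F hF =>
    refine fun a b ha hb => .single ?_
    rw [hF] at ha hb ⊢
    exact insert_subset (singleton_subset_iff.1 ha) hb
  | shed Δ x _ _ hshed ihdel _ =>
    have hdel := isConnected_iff_reachable.1 (ihdel fun F hF => hfacet F (hshed F hF))
    have hleave : ∀ c, {c} ∈ Δ.faces →
        ∃ c', {c'} ∈ (Δ.del x).faces ∧ Δ.graph.Reachable c c' := by
      intro c hc
      by_cases hcx : c = x
      · obtain ⟨z, hz⟩ := exists_graph_adj hfacet hc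
        refine ⟨z, ⟨Δ.down_closed hz.2 (by simp), by simpa [eq_comm, ← hcx] using hz.1⟩,
          hz.reachable⟩
      · exact ⟨c, ⟨hc, by simpa [eq_comm] using hcx⟩, .rfl⟩
    refine isConnected_iff_reachable.2 fun a b ha hb => ?_
    obtain ⟨a', ha', haa'⟩ := hleave a ha
    obtain ⟨b', hb', hbb'⟩ := hleave b hb
    exact haa'.trans (((hdel a' b' ha' hb').mono graph_del_le).trans hbb'.symm)

end SimplicialComplex

open SimplicialComplex in
/-- a (nonempty, finite) pure one-dimensional simplicial complex
(every facet has exactly two vertices) is connected iff it is vertex decomposable. -/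
theorem pure_one_dimensional_connected_iff_vertexDecomposable {V : Type*}
    [Fintype V] [DecidableEq V] (Δ : SimplicialComplex V)
    (hne : Δ.faces.Nonempty) (hpure : ∀ F, Δ.IsFacet F → F.card = 2) :
    Δ.IsConnected ↔ IsVertexDecomposable Δ :=
  ⟨fun h => h.isVertexDecomposable hne hpure,
    fun h => h.isConnected fun F hF => (hpure F hF).ge⟩
end
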